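/- arXiv:2410.19305 — 2 statements merged into one kernel-verified Lean document; each statement's English description precedes it below -/
import Mathlib

section
/- Let 𝔰 be a finite-dimensional simple complex Lie algebra equipped with a norm. There exists δ > 0 (depending on 𝔰 and the norm) such that for every n ≥ 1 and every nonzero Lie algebra homomorphism φ : 𝔰 → 𝔤𝔩_n(ℂ), one has sup{‖φ(w)‖ : w ∈ 𝔰, ‖w‖ ≤ 1} ≥ δ. -/
open scoped Matrix.Norms.L2Operator

attribute [local instance 100] LieRing.ofAssociativeRing

/-!
A simple Lie algebra is perfect, so it has a basis of brackets `⁅x i, y i⁆`. For a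
homomorphism `φ` into an associative normed algebra, `φ ⁅x, y⁆ = φ x * φ y - φ y * φ x` then
makes `φ` quadratic in itself: `‖φ‖ ≤ C * ‖φ‖ ^ 2`, where `C` depends only on the basis and
the brackets, not on `φ` or the target. So `‖φ‖ ≥ C⁻¹` whenever `φ ≠ 0`, and the operator norm
`‖φ‖` is exactly the supremum of `‖φ w‖` over the unit ball.
-/

universe u

open LieAlgebra

theorem LieAlgebra.IsSimple.derivedSeries_one_eq_top {R L : Type*} [CommRing R] [LieRing L]
    [LieAlgebra R L] [IsSimple R L] : derivedSeries R L 1 = ⊤ := by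
  refine (IsSimple.eq_bot_or_eq_top _).resolve_left fun h => IsSimple.non_abelian R (L := L) ⟨?_⟩
  intro x y
  have hmem : ⁅x, y⁆ ∈ (derivedSeries R L 1 : Submodule R L) := by
    rw [coe_derivedSeries_one_eq]
    exact Submodule.subset_span ⟨x, y, rfl⟩
  rw [h] at hmem
  exact (LieSubmodule.mem_bot (R := R) (L := L) _).mp hmem

theorem LieAlgebra.exists_basis_lie_of_derivedSeries_one_eq_top {K : Type*} {L : Type u} [Field K]
    [LieRing L] [LieAlgebra K L]
    (h : derivedSeries K L 1 = ⊤) :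
    ∃ (ι : Type u) (b : Module.Basis ι K L) (x y : ι → L), ∀ i, b i = ⁅x i, y i⁆ := by
  have hspan : ⊤ ≤ Submodule.span K {⁅x, y⁆ | (x : L) (y : L)} := by
    rw [← coe_derivedSeries_one_eq, h]
    rfl
  have hbrackets (i) : ∃ x y : L, ⁅x, y⁆ = Module.Basis.ofSpan hspan i :=
    Module.Basis.ofSpan_subset hspan ⟨i, rfl⟩
  choose x y hxy using hbrackets
  exact ⟨_, Module.Basis.ofSpan hspan, x, y, fun i => (hxy i).symm⟩

theorem norm_mul_sub_mul_le {A : Type*} [NonUnitalSeminormedRing A] (a b : A) :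
    ‖a * b - b * a‖ ≤ 2 * (‖a‖ * ‖b‖) :=
  calc ‖a * b - b * a‖ ≤ ‖a * b‖ + ‖b * a‖ := norm_sub_le _ _
    _ ≤ ‖a‖ * ‖b‖ + ‖b‖ * ‖a‖ := add_le_add (norm_mul_le a b) (norm_mul_le b a)
    _ = 2 * (‖a‖ * ‖b‖) := by ring

theorem ContinuousLinearMap.norm_le_mul_norm_sq_of_map_basis_eq_commutator
    {𝕜 E A ι : Type*} [NontriviallyNormedField 𝕜] [CompleteSpace 𝕜]
    [NormedAddCommGroup E] [NormedSpace 𝕜 E] [NonUnitalNormedRing A] [NormedSpace 𝕜 A]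
    [Fintype ι] (b : Module.Basis ι 𝕜 E) (x y : ι → E) (f : E →L[𝕜] A)
    (hf : ∀ i, f (b i) = f (x i) * f (y i) - f (y i) * f (x i)) :
    ‖f‖ ≤ 2 * ‖(b.equivFunL : E →L[𝕜] ι → 𝕜)‖ * (∑ i, ‖x i‖ * ‖y i‖) * ‖f‖ ^ 2 := by
  set K := ‖(b.equivFunL : E →L[𝕜] ι → 𝕜)‖
  refine f.opNorm_le_bound (by positivity) fun w => ?_
  have hcoord (i : ι) : ‖b.repr w i‖ ≤ K * ‖w‖ :=
    calc ‖b.repr w i‖ ≤ ‖b.equivFun w‖ := norm_le_pi_norm (b.equivFun w) i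
      _ ≤ K * ‖w‖ := (b.equivFunL : E →L[𝕜] ι → 𝕜).le_opNorm w
  have hbasis (i : ι) : ‖f (b i)‖ ≤ 2 * ‖f‖ ^ 2 * (‖x i‖ * ‖y i‖) := by
    rw [hf]
    calc _ ≤ 2 * (‖f (x i)‖ * ‖f (y i)‖) := norm_mul_sub_mul_le _ _
      _ ≤ 2 * ((‖f‖ * ‖x i‖) * (‖f‖ * ‖y i‖)) := by gcongr <;> exact f.le_opNorm _
      _ = 2 * ‖f‖ ^ 2 * (‖x i‖ * ‖y i‖) := by ring
  calc ‖f w‖ = ‖∑ i, b.repr w i • f (b i)‖ := by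
        conv_lhs => rw [← b.sum_repr w]
        simp only [map_sum, map_smul]
    _ ≤ ∑ i, ‖b.repr w i‖ * ‖f (b i)‖ := (norm_sum_le _ _).trans_eq (by simp only [norm_smul])
    _ ≤ ∑ i, (K * ‖w‖) * (2 * ‖f‖ ^ 2 * (‖x i‖ * ‖y i‖)) := by
        gcongr with i
        exacts [hcoord i, hbasis i]
    _ = 2 * K * (∑ i, ‖x i‖ * ‖y i‖) * ‖f‖ ^ 2 * ‖w‖ := by
        simp only [Finset.mul_sum, Finset.sum_mul]
        exact Finset.sum_congr rfl fun i _ => by ring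

/-- For a finite-dimensional simple complex Lie algebra `𝔰` with a norm,
there is `δ > 0` such that every nonzero Lie algebra homomorphism `φ : 𝔰 → 𝔤𝔩_n(ℂ)`
satisfies `sup {‖φ w‖ : ‖w‖ ≤ 1} ≥ δ`, where matrices carry the operator norm. -/
theorem stmt4 (𝔰 : Type*) [LieRing 𝔰] [LieAlgebra ℂ 𝔰] [FiniteDimensional ℂ 𝔰]
    [LieAlgebra.IsSimple ℂ 𝔰]
    (nrm : 𝔰 → ℝ)
    (hnrm_eq : ∀ x, nrm x = 0 ↔ x = 0)
    (hnrm_smul : ∀ (c : ℂ) (x : 𝔰), nrm (c • x) = ‖c‖ * nrm x)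
    (hnrm_add : ∀ x y, nrm (x + y) ≤ nrm x + nrm y) :
    ∃ δ : ℝ, 0 < δ ∧
      ∀ (n : ℕ), 1 ≤ n →
        ∀ φ : 𝔰 →ₗ⁅ℂ⁆ Matrix (Fin n) (Fin n) ℂ, φ ≠ 0 →
          δ ≤ sSup {x : ℝ | ∃ w : 𝔰, nrm w ≤ 1 ∧ x = ‖φ w‖} := by
  let _ : NormedAddCommGroup 𝔰 := AddGroupNorm.toNormedAddCommGroup
    { toFun := nrm
      map_zero' := (hnrm_eq 0).mpr rfl
      add_le' := hnrm_add
      neg' := fun x => by simpa using hnrm_smul (-1) x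
      eq_zero_of_map_eq_zero' := fun x => (hnrm_eq x).mp }
  let _ : NormedSpace ℂ 𝔰 := ⟨fun c x => (hnrm_smul c x).le⟩
  obtain ⟨ι, b, x, y, hb⟩ := exists_basis_lie_of_derivedSeries_one_eq_top
    (IsSimple.derivedSeries_one_eq_top (R := ℂ) (L := 𝔰))
  have := Module.Finite.finite_basis b
  have := Fintype.ofFinite ι
  set C := 2 * ‖(b.equivFunL : 𝔰 →L[ℂ] ι → ℂ)‖ * ∑ i, ‖x i‖ * ‖y i‖
  refine ⟨(C + 1)⁻¹, by positivity, fun n _ φ hφ => ?_⟩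
  let f : 𝔰 →L[ℂ] Matrix (Fin n) (Fin n) ℂ := LinearMap.toContinuousLinearMap φ
  have hf (i : ι) : f (b i) = f (x i) * f (y i) - f (y i) * f (x i) := by
    simp [f, hb, Ring.lie_def]
  have hsup : sSup {x : ℝ | ∃ w : 𝔰, nrm w ≤ 1 ∧ x = ‖φ w‖} = ‖f‖ := by
    rw [← f.sSup_unitClosedBall_eq_norm]
    congr 1
    ext r
    simp only [Set.mem_ofPred_eq, LinearMap.coe_toContinuousLinearMap', LieHom.coe_toLinearMap,
      Set.mem_image, Metric.mem_closedBall, dist_zero_right, eq_comm, f]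
    rfl
  have hf0 : f ≠ 0 := fun h => hφ (LieHom.ext fun w => by simpa [f] using DFunLike.congr_fun h w)
  have hpos : 0 < ‖f‖ := (norm_nonneg f).lt_of_ne' (f.opNorm_zero_iff.not.mpr hf0)
  have hquad := f.norm_le_mul_norm_sq_of_map_basis_eq_commutator b x y hf
  rw [hsup, inv_le_iff_one_le_mul₀ (by positivity)]
  nlinarith
end

section
/- Let N ≥ 2, d ≥ 1, and let D = C(N² + d, d) be the dimension of the space of polynomials of total degree at most d in the N² matrix entries. Let γ_1,…,γ_k ∈ SL_N(ℚ) be such that the set {γ_1,…,γ_k} is closed under taking inverses, and set γ_0 = I (the identity matrix). Suppose p ∈ ℚ[x_{11},…,x_{NN}] is a polynomial of total degree at most d such that p(γ_{i_1} γ_{i_2} ⋯ γ_{i_{D+1}}) = 0 for every tuple (i_1,…,i_{D+1}) ∈ {0,1,…,k}^{D+1}. Then p(γ) = 0 for every element γ of the subgroup of SL_N(ℚ) generated by γ_1,…,γ_k. -/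
/-!
Let `U m` be the space of polynomials of degree `≤ d` vanishing on all products of `m` of the
`γ_i`. Since `γ_0 = 1` these spaces decrease, and since right translation `q ↦ q(· A)` by a
matrix does not raise the degree, `U (m + 1)` consists of the `q` of degree `≤ d` all of whose
translates by the `γ_i` lie in `U m`. So `U (m + 1)` is a fixed function of `U m`: once the chain
stalls it is constant, and it must stall within `dim U 0 ≤ D` steps. Hence `p ∈ U m` for every
`m`, and as the `γ_i` are closed under inverses every element of the group is such a product.
-/

open Module MvPolynomial Pointwise

theorem Nat.exists_le_apply_succ_eq_of_antitone {f : ℕ → ℕ} (hf : Antitone f) :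
    ∃ m ≤ f 0, f (m + 1) = f m := by
  by_contra! hne
  have hdrop : ∀ m ≤ f 0 + 1, f m + m ≤ f 0 := by
    intro m hm
    induction m with
    | zero => simp
    | succ m ih =>
      have := lt_of_le_of_ne (hf (Nat.le_add_right m 1)) (hne m (by omega))
      have := ih (by omega)
      omega
  have := hdrop (f 0 + 1) le_rfl
  omega

namespace Submodule

variable {K V : Type*} [DivisionRing K] [AddCommGroup V] [Module K V]

theorem iInf_eq_of_antitone_of_finrank_le {U : ℕ → Submodule K V} [FiniteDimensional K (U 0)]
    (hU : Antitone U) {F : Submodule K V → Submodule K V} (hF : ∀ m, U (m + 1) = F (U m))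
    {r : ℕ} (hr : finrank K (U 0) ≤ r) : ⨅ m, U m = U r := by
  have : ∀ m, FiniteDimensional K (U m) := fun m =>
    Submodule.finiteDimensional_of_le (hU m.zero_le)
  obtain ⟨m₀, hm₀, hstall⟩ :=
    Nat.exists_le_apply_succ_eq_of_antitone fun _ _ h => finrank_mono (hU h)
  have hstall : U (m₀ + 1) = U m₀ := eq_of_le_of_finrank_eq (hU m₀.le_succ) hstall
  have hconst : ∀ m ≥ m₀, U m = U m₀ := by
    intro m hm
    induction m, hm using Nat.le_induction with
    | base => rfl
    | succ m _ ih => rw [hF, ih, ← hF, hstall]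
  refine le_antisymm (iInf_le _ r) (le_iInf fun m => ?_)
  rcases le_total m r with hmr | hrm
  · exact hU hmr
  · rw [hconst m (by omega), ← hconst r (by omega)]

end Submodule

namespace Set

theorem mem_range_pow {M ι : Type*} [Monoid M] {γ : ι → M} {g : M} {m : ℕ} :
    g ∈ range γ ^ m ↔ ∃ κ : Fin m → ι, (List.ofFn fun t => γ (κ t)).prod = g := by
  rw [mem_pow]
  constructor
  · rintro ⟨f, rfl⟩
    choose κ hκ using fun t => (f t).2
    exact ⟨κ, by simp only [hκ]⟩
  · rintro ⟨κ, rfl⟩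
    exact ⟨fun t => ⟨γ (κ t), mem_range_self _⟩, rfl⟩

end Set

theorem Submonoid.exists_mem_pow_of_mem_closure {M : Type*} [Monoid M] {s : Set M} {x : M}
    (hx : x ∈ Submonoid.closure s) : ∃ m : ℕ, x ∈ s ^ m := by
  induction hx using Submonoid.closure_induction with
  | mem x hx => exact ⟨1, by rwa [pow_one]⟩
  | one => exact ⟨0, by rw [pow_zero]; rfl⟩
  | mul x y _ _ hx hy =>
    obtain ⟨a, hx⟩ := hx
    obtain ⟨b, hy⟩ := hy
    exact ⟨a + b, by rw [pow_add]; exact Set.mul_mem_mul hx hy⟩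

namespace MvPolynomial

theorem totalDegree_bind₁_le {σ τ R : Type*} [CommSemiring R] (g : σ → MvPolynomial τ R)
    (hg : ∀ i, (g i).totalDegree ≤ 1) (φ : MvPolynomial σ R) :
    (bind₁ g φ).totalDegree ≤ φ.totalDegree := by
  conv_lhs => rw [φ.as_sum, map_sum]
  refine totalDegree_finsetSum_le fun v hv => ?_
  rw [bind₁_monomial]
  calc (C (coeff v φ) * ∏ i ∈ v.support, g i ^ v i).totalDegree
      ≤ 0 + ∑ i ∈ v.support, (g i ^ v i).totalDegree :=
        (totalDegree_mul _ _).trans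
          (add_le_add (totalDegree_C _).le (totalDegree_finsetProd _ _))
    _ ≤ ∑ i ∈ v.support, v i * 1 := by
        rw [zero_add]
        exact Finset.sum_le_sum fun i _ =>
          (totalDegree_pow _ _).trans (Nat.mul_le_mul_left _ (hg i))
    _ ≤ φ.totalDegree := by simpa only [mul_one, Finsupp.sum] using le_totalDegree hv

/-- Stars and bars: padding a monomial of degree `≤ d` with a dummy variable of exponent
`d - deg` embeds the monomials into `Sym (Option σ) d`. -/
theorem finrank_restrictTotalDegree_le (σ R : Type*) [Fintype σ] [CommRing R] [Nontrivial R]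
    (d : ℕ) :
    finrank R (restrictTotalDegree σ R d) ≤ (Fintype.card σ + d).choose d := by
  classical
  set S : Set (σ →₀ ℕ) := {v | (v.sum fun _ e => e) ≤ d}
  let pad : S → {P : Option σ →₀ ℕ // P.sum (fun _ ↦ id) = d} := fun v =>
    ⟨(v : σ →₀ ℕ).optionElim (d - (v : σ →₀ ℕ).sum fun _ e => e), by
      rw [Finsupp.sum_option_index _ _ (fun _ => rfl) (fun _ _ _ => rfl)]
      simp only [Finsupp.optionElim_apply_none, Finsupp.some_optionElim, id]
      exact Nat.sub_add_cancel v.2⟩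
  have hpad : Function.Injective ((Sym.equivNatSum (Option σ) d).symm ∘ pad) := by
    refine (Equiv.injective _).comp fun v w h => ?_
    have := congrArg (fun P : {P : Option σ →₀ ℕ // _} => (P : Option σ →₀ ℕ).some) h
    simpa [pad, Finsupp.some_optionElim, Subtype.ext_iff] using this
  have : Finite S := Finite.of_injective _ hpad
  rw [restrictTotalDegree, finrank_eq_nat_card_basis (basisRestrictSupport R S)]
  calc Nat.card S ≤ Nat.card (Sym (Option σ) d) := Nat.card_le_card_of_injective _ hpad
    _ = (Fintype.card σ + d).choose d := by
        rw [Nat.card_eq_fintype_card, Sym.card_sym_eq_choose, Fintype.card_option,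
          Nat.add_right_comm, Nat.add_sub_cancel]

end MvPolynomial

namespace Matrix

section RightTranslate

variable {n R : Type*} [Fintype n] [CommSemiring R]

/-- The substitution `q ↦ q(X * A)`, where `X` is the generic matrix. -/
noncomputable def rightTranslate (A : Matrix n n R) :
    MvPolynomial (n × n) R →ₐ[R] MvPolynomial (n × n) R :=
  bind₁ fun s => ∑ c, C (A c s.2) * X (s.1, c)

theorem eval_rightTranslate (M A : Matrix n n R) (q : MvPolynomial (n × n) R) :
    eval (fun s => M s.1 s.2) (rightTranslate A q) = eval (fun s => (M * A) s.1 s.2) q := by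
  change aeval _ (bind₁ _ q) = aeval _ q
  rw [aeval_bind₁]
  congr 2 with s
  simp [Matrix.mul_apply, mul_comm]

theorem totalDegree_rightTranslate_le (A : Matrix n n R) (q : MvPolynomial (n × n) R) :
    (rightTranslate A q).totalDegree ≤ q.totalDegree := by
  refine totalDegree_bind₁_le _ (fun s => totalDegree_finsetSum_le fun c _ => ?_) q
  rw [C_mul_X_eq_monomial]
  exact (totalDegree_monomial_le _ _).trans (by simp)

end RightTranslate

section Vanishing

variable {n K : Type*} [Field K]

noncomputable def vanishingSubmodule (d : ℕ) (T : Set (Matrix n n K)) :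
    Submodule K (MvPolynomial (n × n) K) :=
  restrictTotalDegree (n × n) K d ⊓
    ⨅ M ∈ T, LinearMap.ker (aeval fun s : n × n => M s.1 s.2).toLinearMap

theorem mem_vanishingSubmodule {d : ℕ} {T : Set (Matrix n n K)} {q : MvPolynomial (n × n) K} :
    q ∈ vanishingSubmodule d T ↔
      q.totalDegree ≤ d ∧ ∀ M ∈ T, eval (fun s => M s.1 s.2) q = 0 := by
  simp [vanishingSubmodule, mem_restrictTotalDegree, aeval_eq_eval]

theorem vanishingSubmodule_anti (d : ℕ) : Antitone (vanishingSubmodule (n := n) (K := K) d) :=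
  fun _ _ hT _ hq => mem_vanishingSubmodule.2
    ⟨(mem_vanishingSubmodule.1 hq).1, fun M hM => (mem_vanishingSubmodule.1 hq).2 M (hT hM)⟩

variable [Fintype n]

theorem vanishingSubmodule_mul (d : ℕ) (T S : Set (Matrix n n K)) :
    vanishingSubmodule d (T * S) = restrictTotalDegree (n × n) K d ⊓
      ⨅ A ∈ S, (vanishingSubmodule d T).comap (rightTranslate A).toLinearMap := by
  ext q
  simp only [Submodule.mem_inf, Submodule.mem_iInf, Submodule.mem_comap, AlgHom.toLinearMap_apply,
    mem_vanishingSubmodule, mem_restrictTotalDegree, eval_rightTranslate, ← Set.image2_mul,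
    Set.forall_mem_image2]
  constructor
  · exact fun ⟨hq, hT⟩ => ⟨hq, fun A hA =>
      ⟨(totalDegree_rightTranslate_le A q).trans hq, fun M hM => hT M hM A hA⟩⟩
  · exact fun ⟨hq, hS⟩ => ⟨hq, fun M hM A hA => (hS A hA).2 M hM⟩

theorem eval_eq_zero_of_mem_closure [DecidableEq n] {S : Set (Matrix n n K)} (hS : 1 ∈ S)
    {p : MvPolynomial (n × n) K} {d m : ℕ} (hp : p.totalDegree ≤ d)
    (hm : finrank K (restrictTotalDegree (n × n) K d) ≤ m)
    (hvanish : ∀ M ∈ S ^ m, eval (fun s => M s.1 s.2) p = 0) :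
    ∀ M ∈ Submonoid.closure S, eval (fun s => M s.1 s.2) p = 0 := by
  set U : ℕ → Submodule K (MvPolynomial (n × n) K) := fun j => vanishingSubmodule d (S ^ j)
  have hU : Antitone U := fun _ _ h =>
    vanishingSubmodule_anti d (Set.pow_subset_pow_right hS h)
  have : FiniteDimensional K (U 0) := Submodule.finiteDimensional_of_le inf_le_left
  have hstable : ⨅ m, U m = U m :=
    Submodule.iInf_eq_of_antitone_of_finrank_le hU
      (F := fun W => restrictTotalDegree (n × n) K d ⊓
        ⨅ A ∈ S, W.comap (rightTranslate A).toLinearMap)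
      (fun m => by rw [← vanishingSubmodule_mul, ← pow_succ])
      ((Submodule.finrank_mono inf_le_left).trans hm)
  have hpU : p ∈ ⨅ m, U m := hstable ▸ mem_vanishingSubmodule.2 ⟨hp, hvanish⟩
  intro M hM
  obtain ⟨j, hj⟩ := Submonoid.exists_mem_pow_of_mem_closure hM
  exact (mem_vanishingSubmodule.1 (Submodule.mem_iInf U |>.1 hpU j)).2 M hj

end Vanishing

end Matrix

theorem stmt11_general (N d : ℕ) (k : ℕ)
    (γ : Fin (k + 1) → Matrix.SpecialLinearGroup (Fin N) ℚ)
    (hγ0 : γ 0 = 1)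
    (hinv : ∀ i, ∃ j, γ j = (γ i)⁻¹)
    (p : MvPolynomial (Fin N × Fin N) ℚ)
    (hdeg : p.totalDegree ≤ d)
    (hvanish : ∀ ι : Fin (Nat.choose (N ^ 2 + d) d + 1) → Fin (k + 1),
      MvPolynomial.eval
        (fun q => (((List.ofFn fun t => γ (ι t)).prod : Matrix.SpecialLinearGroup (Fin N) ℚ) :
            Matrix (Fin N) (Fin N) ℚ) q.1 q.2) p = 0) :
    ∀ g ∈ Subgroup.closure (Set.range γ),
      MvPolynomial.eval
        (fun q => ((g : Matrix.SpecialLinearGroup (Fin N) ℚ) :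
            Matrix (Fin N) (Fin N) ℚ) q.1 q.2) p = 0 := by
  let φ : Matrix.SpecialLinearGroup (Fin N) ℚ →* Matrix (Fin N) (Fin N) ℚ :=
    Matrix.SpecialLinearGroup.coeMonoidHom
  have hclosure :
      (Subgroup.closure (Set.range γ)).toSubmonoid = Submonoid.closure (Set.range γ) := by
    rw [Subgroup.closure_toSubmonoid, Set.union_eq_left.2]
    rintro _ ⟨i, hi⟩
    obtain ⟨j, hj⟩ := hinv i
    exact ⟨j, by rw [hj, hi, inv_inv]⟩
  have hdim : finrank ℚ (restrictTotalDegree (Fin N × Fin N) ℚ d) ≤ (N ^ 2 + d).choose d + 1 :=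
    (finrank_restrictTotalDegree_le _ ℚ d).trans (by simp [sq])
  intro g hg
  refine Matrix.eval_eq_zero_of_mem_closure (S := φ '' Set.range γ)
    ⟨γ 0, ⟨0, rfl⟩, by simp [φ, hγ0]⟩ hdeg hdim ?_ (φ g) ?_
  · rw [← Set.image_pow]
    rintro _ ⟨h, hh, rfl⟩
    obtain ⟨ι, rfl⟩ := Set.mem_range_pow.1 hh
    exact hvanish ι
  · rw [← MonoidHom.map_mclosure]
    exact Submonoid.mem_map_of_mem φ (hclosure ▸ hg : g ∈ Submonoid.closure (Set.range γ))

/-- If a polynomial `p` of degree at most `d` vanishes on all products of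
`D + 1` of the generators `γ_0 = 1, γ_1, …, γ_k` (a family closed under inverses), where
`D = C(N² + d, d)`, then `p` vanishes on the whole group generated by `γ_1, …, γ_k`. -/
theorem stmt11 (N d : ℕ) (hN : 2 ≤ N) (hd : 1 ≤ d) (k : ℕ)
    (γ : Fin (k + 1) → Matrix.SpecialLinearGroup (Fin N) ℚ)
    (hγ0 : γ 0 = 1)
    (hinv : ∀ i, ∃ j, γ j = (γ i)⁻¹)
    (p : MvPolynomial (Fin N × Fin N) ℚ)
    (hdeg : p.totalDegree ≤ d)
    (hvanish : ∀ ι : Fin (Nat.choose (N ^ 2 + d) d + 1) → Fin (k + 1),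
      MvPolynomial.eval
        (fun q => (((List.ofFn fun t => γ (ι t)).prod : Matrix.SpecialLinearGroup (Fin N) ℚ) :
            Matrix (Fin N) (Fin N) ℚ) q.1 q.2) p = 0) :
    ∀ g ∈ Subgroup.closure (Set.range γ),
      MvPolynomial.eval
        (fun q => ((g : Matrix.SpecialLinearGroup (Fin N) ℚ) :
            Matrix (Fin N) (Fin N) ℚ) q.1 q.2) p = 0 :=
  stmt11_general N d k γ hγ0 hinv p hdeg hvanish
end
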